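/- arXiv:2512.10154 — 2 statements merged into one kernel-verified Lean document; each statement's English description precedes it below -/
import Mathlib

section
/- Let 𝓜 = (M,<,…) be an expansion of a linear order and dim : Def(𝓜) → ℕ ∪ {−∞} a dimension function. Let X be a nonempty definable subset of M such that either (i) dim({x ∈ X | x < a}) ≤ 0 for every a ∈ X, or (ii) dim({x ∈ X | x > a}) ≤ 0 for every a ∈ X. Then dim X = 0. -/
open FirstOrder FirstOrder.Language Set

universe u v w

namespace PaperDim

section Core

variable (L : FirstOrder.Language.{v, w}) (M : Type u) [L.Structure M]

/-- The collection of definable subsets of `M^n` (definable with parameters from `M`). -/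
abbrev DefSet (n : ℕ) : Type u :=
  {X : Set (Fin n → M) // Set.Definable (Set.univ : Set M) L X}

variable {L M}

/-- A definable subset of `M^1` viewed as a subset of `M`. -/
def asSet1 (X : Set (Fin 1 → M)) : Set M := {a : M | (fun _ => a) ∈ X}

/-- The fiber of `X ⊆ M^{n+1}` over `x ∈ M^n`, as a subset of `M^1`. -/
def fiber {n : ℕ} (X : Set (Fin (n + 1) → M)) (x : Fin n → M) : Set (Fin 1 → M) :=
  {y | Fin.snoc x (y 0) ∈ X}

/-- Condition (1) of a dimension function: `dim ∅ = -∞`, `dim {a} = 0`, `dim M = 1`.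
Here `d k` is the value of the dimension function on definable subsets of `M^{k+1}`. -/
def Cond1 (d : ∀ n : ℕ, DefSet L M (n + 1) → WithBot ℕ) : Prop :=
  (∀ X : DefSet L M 1, X.1 = ∅ → d 0 X = ⊥) ∧
  (∀ (X : DefSet L M 1) (a : M), X.1 = ({fun _ => a} : Set (Fin 1 → M)) → d 0 X = 0) ∧
  (∀ X : DefSet L M 1, X.1 = (Set.univ : Set (Fin 1 → M)) → d 0 X = 1)

/-- Condition (2)ₙ (at arity `n + 1`): `dim (X ∪ Y) = max (dim X) (dim Y)`. -/
def Cond2 (d : ∀ n : ℕ, DefSet L M (n + 1) → WithBot ℕ) (n : ℕ) : Prop :=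
  ∀ X Y Z : DefSet L M (n + 1), Z.1 = X.1 ∪ Y.1 → d n Z = max (d n X) (d n Y)

/-- Condition (3)ₙ (at arity `n + 1`): invariance under coordinate permutations. -/
def Cond3 (d : ∀ n : ℕ, DefSet L M (n + 1) → WithBot ℕ) (n : ℕ) : Prop :=
  ∀ (σ : Equiv.Perm (Fin (n + 1))) (X Y : DefSet L M (n + 1)),
    Y.1 = {y : Fin (n + 1) → M | y ∘ σ ∈ X.1} → d n Y = d n X

/-- Condition (3'): invariance under switching the two coordinates, at arity 2. -/
def Cond3' (d : ∀ n : ℕ, DefSet L M (n + 1) → WithBot ℕ) : Prop :=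
  ∀ X Y : DefSet L M 2, Y.1 = {v : Fin 2 → M | ![v 1, v 0] ∈ X.1} → d 1 Y = d 1 X

/-- Condition (4)ₙ, the addition property (at arity `n + 2`):
the set `X(i)` of points over which the fiber of `X` has dimension `i` is definable, and
`dim (X ∩ Π⁻¹(X(i))) = dim X(i) + i`. -/
def Cond4 (d : ∀ n : ℕ, DefSet L M (n + 1) → WithBot ℕ) (n : ℕ) : Prop :=
  ∀ (X : DefSet L M (n + 2)) (i : Fin 2),
    ∃ (Xi : DefSet L M (n + 1)) (W : DefSet L M (n + 2)),
      Xi.1 = {x : Fin (n + 1) → M |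
        ∃ hf : Set.Definable (Set.univ : Set M) L (fiber X.1 x),
          d 0 ⟨fiber X.1 x, hf⟩ = ((i : ℕ) : WithBot ℕ)} ∧
      W.1 = X.1 ∩ (fun z : Fin (n + 2) → M => z ∘ Fin.castSucc) ⁻¹' Xi.1 ∧
      d (n + 1) W = d n Xi + ((i : ℕ) : WithBot ℕ)

/-- A dimension function on the structure `M` (van den Dries). -/
def IsDimFun (d : ∀ n : ℕ, DefSet L M (n + 1) → WithBot ℕ) : Prop :=
  Cond1 d ∧ (∀ n, Cond2 d n) ∧ (∀ n, Cond3 d n) ∧ (∀ n, Cond4 d n)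

/-- A weak dimension function: conditions (1), (2)₁, (3') and (4)ₙ for all `n > 1`. -/
def IsWeakDimFun (d : ∀ n : ℕ, DefSet L M (n + 1) → WithBot ℕ) : Prop :=
  Cond1 d ∧ Cond2 d 0 ∧ Cond3' d ∧ (∀ n, Cond4 d n)

variable (L M)

/-- The set `DIM(M)` of dimension functions on `M`. -/
def DimFuns : Set (∀ n : ℕ, DefSet L M (n + 1) → WithBot ℕ) := {d | IsDimFun d}

/-- `𝔫_dim(M)`: the cardinality of the set of dimension functions on `M`. -/
noncomputable def nDim : Cardinal := Cardinal.mk (DimFuns L M)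

/-- The order `<` is definable in the structure. -/
def LtDefinable [LT M] : Prop :=
  Set.Definable (Set.univ : Set M) L {v : Fin 2 → M | v 0 < v 1}

/-- The graph of addition is definable in the structure. -/
def AddDefinable [Add M] : Prop :=
  Set.Definable (Set.univ : Set M) L {v : Fin 3 → M | v 0 + v 1 = v 2}

/-- The graph of multiplication is definable in the structure. -/
def MulDefinable [Mul M] : Prop :=
  Set.Definable (Set.univ : Set M) L {v : Fin 3 → M | v 0 * v 1 = v 2}

end Core

/-- The order topology on a linear order, generated by open rays. -/
def orderTop (α : Type*) [LinearOrder α] : TopologicalSpace α :=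
  TopologicalSpace.generateFrom {s : Set α | (∃ a, s = Set.Ioi a) ∨ (∃ a, s = Set.Iio a)}

/-- A set is discrete (w.r.t. a topology `t`) if all of its points are isolated in it. -/
def DiscreteIn {α : Type*} (t : TopologicalSpace α) (D : Set α) : Prop :=
  ∀ x ∈ D, ∃ U : Set α, t.IsOpen U ∧ U ∩ D = {x}

/-- An open interval: a nonempty set of the form `(a, b)` with `a, b ∈ M ∪ {±∞}`. -/
def IsOpenInterval {α : Type*} [Preorder α] (S : Set α) : Prop :=
  S.Nonempty ∧ ((∃ a b, S = Set.Ioo a b) ∨ (∃ a, S = Set.Ioi a) ∨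
    (∃ b, S = Set.Iio b) ∨ S = Set.univ)

section Ord

variable (L : FirstOrder.Language.{v, w}) (M : Type u) [L.Structure M]

/-- O-minimality: every definable subset of `M` is a union of a finite set and finitely many
open intervals. -/
def OMinimal [LinearOrder M] : Prop :=
  ∀ X : DefSet L M 1, ∃ (F : Set M) (k : ℕ) (C : Fin k → Set M),
    F.Finite ∧ (∀ i, IsOpenInterval (C i)) ∧ asSet1 X.1 = F ∪ ⋃ i, C i

/-- Weak o-minimality: every definable subset of `M` is a union of finitely many convex sets. -/
def WeaklyOMinimal [LinearOrder M] : Prop :=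
  ∀ X : DefSet L M 1, ∃ (k : ℕ) (C : Fin k → Set M),
    (∀ i, (C i).OrdConnected) ∧ asSet1 X.1 = ⋃ i, C i

/-- Definable completeness: every definable subset of `M` has a supremum and an infimum in
`M ∪ {±∞}`. -/
def DefinablyComplete [LinearOrder M] : Prop :=
  ∀ X : DefSet L M 1,
    ((asSet1 X.1).Nonempty → BddAbove (asSet1 X.1) → ∃ a, IsLUB (asSet1 X.1) a) ∧
    ((asSet1 X.1).Nonempty → BddBelow (asSet1 X.1) → ∃ a, IsGLB (asSet1 X.1) a)

/-- d-minimality: the structure is definably complete and in every elementarily equivalent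
structure, every definable subset of the universe is a union of an open set and finitely many
discrete sets. The linear order is assumed to be the interpretation of the relation symbol `lt`. -/
def DMinimal [LinearOrder M] (lt : L.Relations 2) : Prop :=
  DefinablyComplete L M ∧
  ∀ (N : Type u) [L.Structure N] [LinearOrder N],
    (∀ a b : N, Structure.RelMap lt ![a, b] ↔ a < b) →
    L.ElementarilyEquivalent M N →
    ∀ X : DefSet L N 1,
      ∃ (U : Set N) (k : ℕ) (D : Fin k → Set N),
        (orderTop N).IsOpen U ∧ (∀ i, DiscreteIn (orderTop N) (D i)) ∧
        asSet1 X.1 = U ∪ ⋃ i, D i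

end Ord

open scoped Classical in
/-- The topological dimension of a definable set: the largest `d` such that the image of the
set under some coordinate projection `M^n → M^d` has nonempty interior (w.r.t. the order
topology and the corresponding product topologies). -/
noncomputable def dimTop {M : Type u} [LinearOrder M] {n : ℕ} (X : Set (Fin n → M)) :
    WithBot ℕ :=
  if X = ∅ then ⊥
  else
    ↑(sSup {d : ℕ | ∃ f : Fin d → Fin n, Function.Injective f ∧
      (@interior (Fin d → M) (@Pi.topologicalSpace (Fin d) (fun _ => M) (fun _ => orderTop M))
        ((fun x : Fin n → M => x ∘ f) '' X)).Nonempty})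


/-! ### Extra notions -/

/-- `G ⊆ M²` is the graph of a bijection from `A` onto `B`. -/
def IsDefBijectionGraph {M : Type u} (G : Set (Fin 2 → M)) (A B : Set M) : Prop :=
  (∀ v ∈ G, v 0 ∈ A ∧ v 1 ∈ B) ∧
  (∀ x ∈ A, ∃! y : M, (![x, y] : Fin 2 → M) ∈ G) ∧
  (∀ y ∈ B, ∃! x : M, (![x, y] : Fin 2 → M) ∈ G)

section Extra

variable (L : FirstOrder.Language.{v, w}) (M : Type u) [L.Structure M]

/-- A definable set `I ⊆ M` is self-sufficient if it is infinite and there is no definable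
bijection between an infinite definable subset of `I` and an infinite definable subset of
`M ∖ I`. -/
def SelfSufficient (I : Set M) : Prop :=
  I.Infinite ∧
  ∀ J₁ J₂ : DefSet L M 1, asSet1 J₁.1 ⊆ I → asSet1 J₂.1 ⊆ Iᶜ →
    (asSet1 J₁.1).Infinite → (asSet1 J₂.1).Infinite →
    ¬ ∃ G : DefSet L M 2, IsDefBijectionGraph G.1 (asSet1 J₁.1) (asSet1 J₂.1)

/-- A self-sufficient set is minimally self-sufficient if every self-sufficient set either
meets it in a finite set or contains it up to a finite set. -/
def MinimallySelfSufficient (I : Set M) : Prop :=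
  SelfSufficient L M I ∧
  ∀ X : DefSet L M 1, SelfSufficient L M (asSet1 X.1) →
    (I ∩ asSet1 X.1).Finite ∨ ∃ F : Set M, F.Finite ∧ I ⊆ asSet1 X.1 ∪ F

end Extra

/-- `I₁ ∼_fin I₂`: the symmetric difference is finite. -/
def FinSymmDiff {M : Type u} (A B : Set M) : Prop := ((A \ B) ∪ (B \ A)).Finite

/-- `I⟨τ⟩`: the product of copies of `I` (where `τ i = false`) and `M ∖ I`
(where `τ i = true`). -/
def Itau {M : Type u} (I : Set M) {n : ℕ} (τ : Fin n → Bool) : Set (Fin n → M) :=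
  {v | ∀ i, if τ i then v i ∉ I else v i ∈ I}

open scoped Classical in
/-- The value of `Dim[I]` on a (nonempty) definable set contained in `I⟨τ⟩`. -/
noncomputable def DimIPiece {M : Type u} [LinearOrder M] (I : Set M) :
    (n : ℕ) → (Fin (n + 1) → Bool) → Set (Fin (n + 1) → M) → WithBot ℕ
  | 0, τ, X =>
    if X = ∅ then ⊥ else if τ 0 then 0 else dimTop X
  | n + 1, τ, X =>
    if X = ∅ then ⊥
    else if τ (Fin.last (n + 1)) then
      DimIPiece I n (fun i => τ i.castSucc)
        ((fun v : Fin (n + 2) → M => v ∘ Fin.castSucc) '' X)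
    else
      max (dimTop {x : Fin (n + 1) → M |
              (∃ v ∈ X, v ∘ Fin.castSucc = x) ∧ dimTop (fiber X x) ≠ 1})
        (dimTop {x : Fin (n + 1) → M | dimTop (fiber X x) = 1} + 1)

/-- The function `Dim[I]` associated with a subset `I` of `M` (the input dimension being the
topological dimension). -/
noncomputable def DimI {M : Type u} [LinearOrder M] (I : Set M) (n : ℕ)
    (X : Set (Fin (n + 1) → M)) : WithBot ℕ :=
  Finset.univ.sup fun τ : Fin (n + 1) → Bool => DimIPiece I n τ (X ∩ Itau I τ)

section Morley

variable (L : FirstOrder.Language.{v, w}) (M : Type u) [L.Structure M]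

/-- The model-theoretic algebraic closure of a set of parameters `A`. -/
def aclS (A : Set M) : Set M :=
  {a : M | ∃ s : Set (Fin 1 → M), Set.Definable A L s ∧ s.Finite ∧ (fun _ => a) ∈ s}

open scoped Classical in
/-- The rank `rk^acl(X/A)`: the largest cardinality of a subset of the coordinates of a point
of `X` that is `acl`-independent over `A` (and `-∞` for `X = ∅`). -/
noncomputable def rkOver {n : ℕ} (A : Set M) (X : Set (Fin n → M)) : WithBot ℕ :=
  if X = ∅ then ⊥
  else
    ↑(sSup {k : ℕ | ∃ x ∈ X, ∃ S : Finset (Fin n), S.card = k ∧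
        ∀ i ∈ S, x i ∉ aclS L M (A ∪ x '' {j : Fin n | j ∈ S ∧ j ≠ i})})

/-- A structure is minimal if every definable subset of the universe is finite or cofinite. -/
def MinimalStr : Prop :=
  ∀ X : DefSet L M 1, (asSet1 X.1).Finite ∨ ((asSet1 X.1)ᶜ : Set M).Finite

/-- A structure is strongly minimal if every elementarily equivalent structure is minimal. -/
def StronglyMinimal : Prop :=
  MinimalStr L M ∧
  ∀ (N : Type u) [L.Structure N], L.ElementarilyEquivalent M N → MinimalStr L N

end Morley

section Theories

/-- A divisible Abelian group structure on a subset `S`, with addition `f`. -/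
def DivAbGroupOn {α : Type*} (f : α → α → α) (S : Set α) : Prop :=
  (∀ x ∈ S, ∀ y ∈ S, f x y ∈ S) ∧
  (∀ x ∈ S, ∀ y ∈ S, f x y = f y x) ∧
  (∀ x ∈ S, ∀ y ∈ S, ∀ z ∈ S, f (f x y) z = f x (f y z)) ∧
  (∃ e ∈ S, (∀ x ∈ S, f e x = x) ∧ (∀ x ∈ S, ∃ y ∈ S, f x y = e)) ∧
  (∀ k : ℕ, 0 < k → ∀ x ∈ S, ∃ y ∈ S, (f y)^[k - 1] y = x)

/-- Embedding of `M` into `M ∪ {±∞}`. -/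
def emb {α : Type*} (x : α) : WithBot (WithTop α) := ((x : WithTop α) : WithBot (WithTop α))

/-- `M` is a model of the theory `T_m` of Proposition 3.17: a DLO with constants
`c_1 < ⋯ < c_{m-1}` (recorded here by the boundary sequence
`⊥ = c 0 < c 1 < ⋯ < c m = ⊤` in `M ∪ {±∞}`), such that `+` restricts to a divisible Abelian
group on each interval `(c_{i-1}, c_i)` and is constantly `c_1` off the union of the
`(c_{i-1}, c_i)²`. -/
def ModelTm (m : ℕ) (hm : 0 < m) (L : FirstOrder.Language.{v, w}) (M : Type u)
    [L.Structure M] [LinearOrder M]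
    (lt : L.Relations 2) (plus : L.Functions 2)
    (c : Fin (m + 1) → WithBot (WithTop M)) : Prop :=
  DenselyOrdered M ∧ NoMinOrder M ∧ NoMaxOrder M ∧ Nonempty M ∧
  (∀ x y : M, Structure.RelMap lt ![x, y] ↔ x < y) ∧
  c 0 = ⊥ ∧ c (Fin.last m) = ⊤ ∧ StrictMono c ∧
  (∀ i : Fin (m + 1), i ≠ 0 → i ≠ Fin.last m → ∃ x : M, c i = emb x) ∧
  (∀ i : Fin m,
    DivAbGroupOn (fun x y : M => Structure.funMap plus ![x, y])
      {x : M | c i.castSucc < emb x ∧ emb x < c i.succ}) ∧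
  (∀ x y : M,
    (¬ ∃ i : Fin m, (c i.castSucc < emb x ∧ emb x < c i.succ) ∧
        (c i.castSucc < emb y ∧ emb y < c i.succ)) →
    ∀ z : M, c ⟨1, by omega⟩ = emb z → Structure.funMap plus ![x, y] = z)

/-- The set of realizations of a unary predicate. -/
def relSet (L : FirstOrder.Language.{v, w}) (M : Type u) [L.Structure M]
    (r : L.Relations 1) : Set M :=
  {x : M | Structure.RelMap r ![x]}

/-- `M` is a model of the theory `T_m` of Theorem 3.18: an ordered divisible Abelian group
with a strictly increasing chain of nontrivial proper convex subgroups `U_1 ⊊ ⋯ ⊊ U_m ⊊ M`. -/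
def ModelTw (m : ℕ) (L : FirstOrder.Language.{v, w}) (M : Type u)
    [L.Structure M] [AddCommGroup M] [LinearOrder M] [IsOrderedAddMonoid M]
    (lt : L.Relations 2) (plus : L.Functions 2) (U : Fin m → L.Relations 1) : Prop :=
  (∀ x y : M, Structure.RelMap lt ![x, y] ↔ x < y) ∧
  (∀ x y : M, Structure.funMap plus ![x, y] = x + y) ∧
  (∀ k : ℕ, 0 < k → ∀ x : M, ∃ y : M, k • y = x) ∧
  (∀ i : Fin m,
    (0 : M) ∈ relSet L M (U i) ∧
    (∀ x ∈ relSet L M (U i), ∀ y ∈ relSet L M (U i), x + y ∈ relSet L M (U i)) ∧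
    (∀ x ∈ relSet L M (U i), -x ∈ relSet L M (U i)) ∧
    (relSet L M (U i)).OrdConnected ∧
    relSet L M (U i) ≠ {0} ∧ relSet L M (U i) ≠ Set.univ) ∧
  (∀ i j : Fin m, i < j → relSet L M (U i) ⊂ relSet L M (U j))

end Theories

/-!
Let `Lo = {(a, b) ∈ X² | b < a}` and let `Up` be its mirror image. The fibers of `Lo` are the
lower truncations of `X`, of dimension `≤ 0`, so the addition property gives `dim Lo ≤ 1`, and
`dim Up = dim Lo` by permutation invariance. If some upper truncation at a point `a ∈ X` also has
dimension `≤ 0`, then `X` is covered by two truncations and `{a}`, so `dim X ≤ 0`. Otherwise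
every fiber of `Up` over `X` has dimension `1`, and the addition property gives
`dim X + 1 ≤ dim Up ≤ 1`. The argument uses only trichotomy and definability of `<`, so it
applies verbatim to `>`.
-/

section

variable {L : FirstOrder.Language.{v, w}} {M : Type u} [L.Structure M]

lemma const_apply_zero (v : Fin 1 → M) : (fun _ => v 0) = v :=
  funext fun i => by rw [Fin.fin_one_eq_zero i]

lemma definable_singleton (v : Fin 1 → M) :
    Set.Definable (Set.univ : Set M) L ({v} : Set (Fin 1 → M)) := by
  refine ⟨Term.equal (Term.var 0) (L.con (⟨v 0, trivial⟩ : (Set.univ : Set M))).term, ?_⟩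
  ext x
  simp only [Set.mem_singleton_iff, Set.mem_ofPred_eq, Formula.realize_equal,
    Term.realize_var, Term.realize_con]
  exact ⟨fun h => h ▸ rfl, fun h => by rw [← const_apply_zero x, ← const_apply_zero v, h]⟩

lemma definable_fiber {n : ℕ} {s : Set (Fin (n + 1) → M)}
    (hs : Set.Definable (Set.univ : Set M) L s) (x : Fin n → M) :
    Set.Definable (Set.univ : Set M) L (fiber s x) := by
  obtain ⟨φ, hφ⟩ := hs
  refine ⟨φ.subst (Fin.snoc (fun j => (L.con (⟨x j, trivial⟩ : (Set.univ : Set M))).term)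
      (Term.var 0)), ?_⟩
  ext y
  have hassign : (fun i => Term.realize y
      ((Fin.snoc (fun j => (L.con (⟨x j, trivial⟩ : (Set.univ : Set M))).term)
        (Term.var 0) : Fin (n + 1) → _) i)) = Fin.snoc x (y 0) := by
    funext i
    refine Fin.lastCases ?_ (fun j => ?_) i <;> simp
  simp only [fiber, Set.mem_ofPred_eq, hφ, Formula.Realize, BoundedFormula.realize_subst, hassign]

def DefSet.fiber {n : ℕ} (Y : DefSet L M (n + 1)) (x : Fin n → M) : DefSet L M 1 :=
  ⟨PaperDim.fiber Y.1 x, definable_fiber Y.2 x⟩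

def relPairs (S : Set (Fin 1 → M)) (r : M → M → Prop) : Set (Fin 2 → M) :=
  {v | (fun _ => v 0) ∈ S ∧ (fun _ => v 1) ∈ S ∧ r (v 0) (v 1)}

lemma definable_relPairs {S : Set (Fin 1 → M)} {r : M → M → Prop}
    (hS : Set.Definable (Set.univ : Set M) L S)
    (hr : Set.Definable (Set.univ : Set M) L {v : Fin 2 → M | r (v 0) (v 1)}) :
    Set.Definable (Set.univ : Set M) L (relPairs S r) :=
  (hS.preimage_comp fun _ => 0).inter ((hS.preimage_comp fun _ => 1).inter hr)

lemma fiber_relPairs (S : Set (Fin 1 → M)) (r : M → M → Prop) (x : Fin 1 → M) :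
    fiber (relPairs S r) x = {y | x ∈ S ∧ y ∈ S ∧ r (x 0) (y 0)} := by
  ext y
  have hlast : Fin.snoc (α := fun _ => M) x (y 0) 1 = y 0 := Fin.snoc_last (n := 1) _ _
  simp [relPairs, fiber, const_apply_zero, hlast]

lemma relPairs_flip (S : Set (Fin 1 → M)) (r : M → M → Prop) :
    relPairs S (flip r) = {v | v ∘ Equiv.swap 0 1 ∈ relPairs S r} := by
  ext v
  simp only [relPairs, flip, mem_ofPred_eq, Function.comp_apply, Equiv.swap_apply_left,
    Equiv.swap_apply_right]
  tauto

lemma subset_fiber_relPairs_union {S : Set (Fin 1 → M)} {r : M → M → Prop}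
    [Std.Trichotomous r] {a : Fin 1 → M} (ha : a ∈ S) :
    S ⊆ fiber (relPairs S (flip r)) a ∪ ({a} ∪ fiber (relPairs S r) a) := by
  intro x hx
  simp only [fiber_relPairs]
  rcases trichotomous_of r (x 0) (a 0) with hxa | hxa | hxa
  · exact Or.inl ⟨ha, hx, hxa⟩
  · exact Or.inr (Or.inl (funext fun i => by rw [Fin.fin_one_eq_zero i, hxa]))
  · exact Or.inr (Or.inr ⟨ha, hx, hxa⟩)

variable {d : ∀ n : ℕ, DefSet L M (n + 1) → WithBot ℕ}

lemma Cond2.mono {n : ℕ} (h2 : Cond2 d n) {X Y : DefSet L M (n + 1)} (hXY : X.1 ⊆ Y.1) :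
    d n X ≤ d n Y := by
  rw [h2 X Y Y (Set.union_eq_self_of_subset_left hXY).symm]
  exact le_max_left _ _

lemma Cond2.le_of_subset_union {n : ℕ} (h2 : Cond2 d n) {X A B : DefSet L M (n + 1)}
    {c : WithBot ℕ} (hX : X.1 ⊆ A.1 ∪ B.1) (hA : d n A ≤ c) (hB : d n B ≤ c) : d n X ≤ c :=
  (h2.mono (Y := ⟨A.1 ∪ B.1, A.2.union B.2⟩) hX).trans ((h2 A B _ rfl).trans_le (max_le hA hB))

lemma Cond1.dim_le_one (h1 : Cond1 d) (h2 : Cond2 d 0) (X : DefSet L M 1) : d 0 X ≤ 1 :=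
  (h2.mono (Y := ⟨Set.univ, Set.definable_univ⟩) (Set.subset_univ _)).trans_eq (h1.2.2 _ rfl)

lemma Cond1.dim_singleton (h1 : Cond1 d) (v : Fin 1 → M) :
    d 0 ⟨{v}, definable_singleton v⟩ = 0 :=
  h1.2.1 _ (v 0) (by rw [const_apply_zero])

lemma Cond1.dim_nonneg (h1 : Cond1 d) (h2 : Cond2 d 0) {X : DefSet L M 1} (hX : X.1.Nonempty) :
    0 ≤ d 0 X := by
  obtain ⟨v, hv⟩ := hX
  exact (h1.dim_singleton v).symm.trans_le (h2.mono (Set.singleton_subset_iff.2 hv))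

lemma dim_le_one_of_fiber_le_zero
    (h1 : Cond1 d) (h2 : Cond2 d 0) (h4 : Cond4 d 0) (Y : DefSet L M 2)
    (hY : ∀ x, d 0 (Y.fiber x) ≤ 0) : d 1 Y ≤ 1 := by
  obtain ⟨Z, W, hZ, hW, hdW⟩ := h4 Y 0
  have hWY : W = Y := by
    refine Subtype.ext (hW.trans (Set.inter_eq_left.2 fun v hv => ?_))
    have hv1 : (fun _ => v 1) ∈ (Y.fiber (v ∘ Fin.castSucc)).1 := by
      change Fin.snoc (Fin.init v) (v (Fin.last 1)) ∈ Y.1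
      rwa [Fin.snoc_init_self]
    rw [Set.mem_preimage, hZ]
    exact ⟨_, le_antisymm (hY _) (h1.dim_nonneg h2 ⟨_, hv1⟩)⟩
  rw [← hWY, hdW]
  simpa using h1.dim_le_one h2 Z

lemma add_one_le_of_fiber_eq_one {n : ℕ} (h2 : ∀ n, Cond2 d n) (h4 : Cond4 d n)
    (Y : DefSet L M (n + 2)) (A : DefSet L M (n + 1)) (hA : ∀ x ∈ A.1, d 0 (Y.fiber x) = 1) :
    d n A + 1 ≤ d (n + 1) Y := by
  obtain ⟨Z, W, hZ, hW, hdW⟩ := h4 Y 1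
  calc d n A + 1 ≤ d n Z + 1 := by
        gcongr
        exact (h2 n).mono fun x hx => hZ ▸ ⟨_, hA x hx⟩
    _ = d (n + 1) W := by simpa using hdW.symm
    _ ≤ d (n + 1) Y := (h2 (n + 1)).mono (hW ▸ Set.inter_subset_left)

theorem IsDimFun.dim_eq_zero_of_forall_trunc_le_zero (hd : IsDimFun d) {r : M → M → Prop}
    [Std.Trichotomous r]
    (hr : Set.Definable (Set.univ : Set M) L {v : Fin 2 → M | r (v 0) (v 1)})
    (X : DefSet L M 1) (hne : X.1.Nonempty)
    (h : ∀ a : M, (fun _ => a) ∈ X.1 → ∀ Y : DefSet L M 1,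
      Y.1 = {v | v ∈ X.1 ∧ r (v 0) a} → d 0 Y ≤ 0) :
    d 0 X = 0 := by
  obtain ⟨h1, h2, h3, h4⟩ := hd
  let Lo : DefSet L M 2 :=
    ⟨relPairs X.1 (flip r), definable_relPairs X.2 (hr.preimage_comp ![1, 0])⟩
  let Up : DefSet L M 2 := ⟨relPairs X.1 r, definable_relPairs X.2 hr⟩
  have hLo : ∀ x, d 0 (Lo.fiber x) ≤ 0 := by
    intro x
    by_cases hx : x ∈ X.1
    · refine h (x 0) (by rwa [const_apply_zero]) _ ?_
      simp [DefSet.fiber, Lo, fiber_relPairs, hx, flip]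
    · rw [h1.1 _ (by simp [DefSet.fiber, Lo, fiber_relPairs, hx])]
      exact bot_le
  have hUp : d 1 Up ≤ 1 :=
    (h3 1 (Equiv.swap 0 1) Up Lo (relPairs_flip X.1 r)).symm.trans_le
      (dim_le_one_of_fiber_le_zero h1 (h2 0) (h4 0) Lo hLo)
  refine le_antisymm ?_ (h1.dim_nonneg (h2 0) hne)
  by_cases hcut : ∃ a ∈ X.1, d 0 (Up.fiber a) ≤ 0
  · obtain ⟨a, ha, hUa⟩ := hcut
    refine (h2 0).le_of_subset_union (B := ⟨_, (definable_singleton a).union (Up.fiber a).2⟩)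
      (subset_fiber_relPairs_union ha) (hLo a) ?_
    exact (h2 0).le_of_subset_union subset_rfl (h1.dim_singleton a).le hUa
  · push Not at hcut
    have hX : d 0 X + 1 ≤ 0 + 1 :=
      calc d 0 X + 1 ≤ d 1 Up :=
            add_one_le_of_fiber_eq_one h2 (h4 0) Up X fun a ha =>
              le_antisymm (h1.dim_le_one (h2 0) _) (Nat.WithBot.one_le_iff_zero_lt.2 (hcut a ha))
        _ ≤ 0 + 1 := by simpa using hUp
    exact (WithBot.add_le_add_iff_right WithBot.one_ne_bot).1 hX

end

/-- Let `M` be an expansion of a linear order, `dim` a dimension function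
and `X` a nonempty definable subset of `M` such that either all truncations
`{x ∈ X | x < a}` (`a ∈ X`) have dimension `≤ 0`, or all truncations `{x ∈ X | x > a}`
(`a ∈ X`) have dimension `≤ 0`. Then `dim X = 0`. -/
theorem statement_10 (L : FirstOrder.Language.{v, w}) (M : Type u) [L.Structure M]
    [LinearOrder M] (hlt : LtDefinable L M)
    (d : ∀ n : ℕ, DefSet L M (n + 1) → WithBot ℕ) (hd : d ∈ DimFuns L M)
    (X : DefSet L M 1) (hne : X.1.Nonempty)
    (h : (∀ a : M, (fun _ => a) ∈ X.1 → ∀ Y : DefSet L M 1,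
            Y.1 = {v | v ∈ X.1 ∧ v 0 < a} → d 0 Y ≤ 0) ∨
         (∀ a : M, (fun _ => a) ∈ X.1 → ∀ Y : DefSet L M 1,
            Y.1 = {v | v ∈ X.1 ∧ a < v 0} → d 0 Y ≤ 0)) :
    d 0 X = 0 := by
  rcases h with h | h
  · exact IsDimFun.dim_eq_zero_of_forall_trunc_le_zero hd hlt X hne h
  · exact IsDimFun.dim_eq_zero_of_forall_trunc_le_zero hd (r := (· > ·))
      (hlt.preimage_comp ![1, 0]) X hne h

end PaperDim
end

section
/- Let 𝓜 = (M,<,…) be an expansion of a linear order. Every dimension function dim : Def(𝓜) → ℕ ∪ {−∞} is completely determined by its restriction to the collection of bounded definable subsets of M; moreover, for any dimension function there exists a bounded definable subset X of M with dim X = 1. -/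
open FirstOrder FirstOrder.Language Set

universe u v w

namespace PaperDim

/-!
A dimension function is determined by its values on subsets of `M`: by (2) and (4),
`dim X = max (dim X(0)) (dim X(1) + 1)`, and the sets `X(i)` only depend on the dimensions of
fibers. On `M` the only values are `-∞`, `0`, `1`, so it suffices that every `X ⊆ M` with
`dim X = 1` has a bounded definable subset of dimension `1`.

Cutting `X` at a point, we may assume `X` bounded below and, for a contradiction, every
`X ∩ (-∞, b]` of dimension `≤ 0`. Then `T = {(b, y) | y ∈ X, y ≤ b}` has `0`-dimensional
fibers, so `dim T ≤ 1`. By (3) its transpose, whose fiber over `y ∈ X` is the ray `[y, ∞)`,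
has dimension `≤ 1` too, so the rays over points of `X` are `0`-dimensional outside a
`0`-dimensional set; in particular `dim [y, ∞) = 0` for some `y ∈ X`, and then
`X ⊆ (X ∩ (-∞, y]) ∪ [y, ∞)` is `0`-dimensional.
-/

section DimensionFunction

variable {L : FirstOrder.Language.{v, w}} {M : Type u} [L.Structure M]

lemma definable_preimage_subst {m k : ℕ} {S : Set (Fin m → M)}
    (hS : (univ : Set M).Definable L S) (g : Fin m → Fin k ⊕ M) :
    (univ : Set M).Definable L {v : Fin k → M | (fun i => Sum.elim v id (g i)) ∈ S} :=
  hS.preimage_map fun i => by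
    cases g i with
    | inl j => exact DefinableFun.proj L
    | inr a => exact L.definableFun_const _ (mem_univ a)

lemma definable_fiber_s11 {n : ℕ} {S : Set (Fin (n + 2) → M)}
    (hS : (univ : Set M).Definable L S) (x : Fin (n + 1) → M) :
    (univ : Set M).Definable L (fiber S x) := by
  convert definable_preimage_subst hS (Fin.lastCases (Sum.inl (0 : Fin 1)) (Sum.inr ∘ x)) using 1
  ext y
  refine iff_of_eq (congrArg (· ∈ S) (funext fun j => ?_))
  induction j using Fin.lastCases <;> simp

lemma const_fin_one_eq (y : Fin 1 → M) : (fun _ => y 0) = y :=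
  funext fun i => congrArg y (Subsingleton.elim 0 i)

@[simp]
lemma Fin.snoc_one (x : Fin 1 → M) (a : M) : (Fin.snoc x a : Fin 2 → M) 1 = a :=
  Fin.snoc_last (α := fun _ => M) a x

lemma WithBot.eq_zero_or_eq_one {a : WithBot ℕ} (h0 : 0 ≤ a) (h1 : a ≤ 1) :
    a = 0 ∨ a = 1 := by
  induction a using WithBot.recBotCoe with
  | bot => simp at h0
  | coe n =>
    simp only [← WithBot.coe_one, ← WithBot.coe_zero, WithBot.coe_le_coe, WithBot.coe_inj] at *
    omega

lemma WithBot.le_zero_of_add_one_le_one {a : WithBot ℕ} (h : a + 1 ≤ 1) : a ≤ 0 := by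
  induction a using WithBot.recBotCoe with
  | bot => simp
  | coe n =>
    simp only [← WithBot.coe_one, ← WithBot.coe_zero, ← WithBot.coe_add,
      WithBot.coe_le_coe] at *
    omega

variable {d : ∀ n : ℕ, DefSet L M (n + 1) → WithBot ℕ}

lemma Cond2.dim_mono {n : ℕ} (h2 : Cond2 d n) {X Y : DefSet L M (n + 1)} (h : X.1 ⊆ Y.1) :
    d n X ≤ d n Y :=
  h2 X Y Y (union_eq_self_of_subset_left h).symm ▸ le_max_left _ _

lemma Cond2.dim_le_max_of_subset_union {n : ℕ} (h2 : Cond2 d n) {X A B : DefSet L M (n + 1)}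
    (h : X.1 ⊆ A.1 ∪ B.1) : d n X ≤ max (d n A) (d n B) :=
  (h2.dim_mono (Y := ⟨_, A.2.union B.2⟩) h).trans_eq (h2 A B _ rfl)

lemma Cond1.dim_eq_zero_or_eq_one (h1 : Cond1 d) (h2 : Cond2 d 0) {X : DefSet L M 1}
    (hX : X.1.Nonempty) : d 0 X = 0 ∨ d 0 X = 1 :=
  WithBot.eq_zero_or_eq_one (h1.dim_nonneg h2 hX) (h1.dim_le_one h2 X)

lemma Cond1.nonempty_of_dim_ne_bot (h1 : Cond1 d) {X : DefSet L M 1} (hX : d 0 X ≠ ⊥) :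
    X.1.Nonempty :=
  nonempty_iff_ne_empty.2 fun h => hX (h1.1 X h)

variable (L) in
/-- The set `X(k)` of condition (4): the points over which the fiber of `X` has dimension `k`. -/
def fiberDimSet (d₀ : DefSet L M 1 → WithBot ℕ) {n : ℕ} (X : Set (Fin (n + 2) → M))
    (k : WithBot ℕ) : Set (Fin (n + 1) → M) :=
  {x | ∃ hf : (univ : Set M).Definable L (fiber X x), d₀ ⟨fiber X x, hf⟩ = k}

lemma IsDimFun.exists_fiberDimSet_dim_eq_max (hd : IsDimFun d) {n : ℕ} (X : DefSet L M (n + 2)) :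
    ∃ P₀ P₁ : DefSet L M (n + 1),
      P₀.1 = fiberDimSet L (d 0) X.1 0 ∧ P₁.1 = fiberDimSet L (d 0) X.1 1 ∧
      d (n + 1) X = max (d n P₀) (d n P₁ + 1) := by
  obtain ⟨P₀, W₀, hP₀, hW₀, hdW₀⟩ := hd.2.2.2 n X 0
  obtain ⟨P₁, W₁, hP₁, hW₁, hdW₁⟩ := hd.2.2.2 n X 1
  simp only [Fin.isValue, Fin.val_zero, Fin.val_one, Nat.cast_zero, Nat.cast_one]
    at hP₀ hP₁ hdW₀ hdW₁
  have hX : X.1 = W₀.1 ∪ W₁.1 := by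
    rw [hW₀, hW₁, ← inter_union_distrib_left, eq_comm, inter_eq_left]
    intro v hv
    have hf := definable_fiber_s11 X.2 (Fin.init v)
    have hne : (fiber X.1 (Fin.init v)).Nonempty :=
      ⟨fun _ => v (Fin.last _), by simpa [fiber, Fin.snoc_init_self] using hv⟩
    rcases hd.1.dim_eq_zero_or_eq_one (hd.2.1 0) (X := ⟨_, hf⟩) hne with h | h
    · exact Or.inl (hP₀ ▸ ⟨hf, h⟩)
    · exact Or.inr (hP₁ ▸ ⟨hf, h⟩)
  refine ⟨P₀, P₁, hP₀, hP₁, ?_⟩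
  rw [hd.2.1 _ W₀ W₁ X hX, hdW₀, hdW₁, add_zero]

lemma IsDimFun.eq_of_dim_eq {d' : ∀ n : ℕ, DefSet L M (n + 1) → WithBot ℕ}
    (hd : IsDimFun d) (hd' : IsDimFun d') (h : d 0 = d' 0) : d = d' := by
  funext n
  induction n with
  | zero => exact h
  | succ n ih =>
    funext X
    obtain ⟨P₀, P₁, hP₀, hP₁, hdX⟩ := hd.exists_fiberDimSet_dim_eq_max X
    obtain ⟨Q₀, Q₁, hQ₀, hQ₁, hd'X⟩ := hd'.exists_fiberDimSet_dim_eq_max X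
    obtain rfl : P₀ = Q₀ := Subtype.ext (hP₀.trans (h ▸ hQ₀.symm))
    obtain rfl : P₁ = Q₁ := Subtype.ext (hP₁.trans (h ▸ hQ₁.symm))
    rw [hdX, hd'X, ih]

-- `r` will be `≤` or `≥`, so that one lemma handles both halves of a set cut at a point.
lemma IsDimFun.exists_dim_initialSegment_eq_one (hd : IsDimFun d) {r : M → M → Prop}
    (hr_total : ∀ a b, r a b ∨ r b a)
    (hr : (univ : Set M).Definable L {v : Fin 2 → M | r (v 0) (v 1)})
    {X : DefSet L M 1} (hX : d 0 X = 1) :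
    ∃ (b : M) (Y : DefSet L M 1), Y.1 = X.1 ∩ {y | r (y 0) b} ∧ d 0 Y = 1 := by
  obtain ⟨h1, h2, h3, -⟩ := id hd
  by_contra! hsmall
  have hsegment (b : M) : (univ : Set M).Definable L (X.1 ∩ {y | r (y 0) b}) :=
    X.2.inter (definable_preimage_subst hr ![Sum.inl 0, Sum.inr b])
  have hsegment_dim (b : M) : d 0 ⟨_, hsegment b⟩ ≤ 0 := by
    rcases eq_empty_or_nonempty (X.1 ∩ {y | r (y 0) b}) with h | h
    · exact (h1.1 _ h).trans_le bot_le
    · exact ((h1.dim_eq_zero_or_eq_one (h2 0) h).resolve_right (hsmall b _ rfl)).le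
  -- `T` collects the initial segments of `X`; its transpose `T'` collects the rays `[y, ∞)`.
  let T : DefSet L M 2 := ⟨{v | (fun _ => v 1) ∈ X.1 ∧ r (v 1) (v 0)},
    (X.2.preimage_comp fun _ => 1).inter (definable_preimage_subst hr ![Sum.inl 1, Sum.inl 0])⟩
  let T' : DefSet L M 2 := ⟨{v | (fun _ => v 0) ∈ X.1 ∧ r (v 0) (v 1)},
    (X.2.preimage_comp fun _ => 0).inter hr⟩
  have hT_fiber (x : Fin 1 → M) : fiber T.1 x = X.1 ∩ {y | r (y 0) (x 0)} := by
    ext y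
    simp [fiber, T, const_fin_one_eq]
  have hT'_fiber (x : Fin 1 → M) (hx : x ∈ X.1) : fiber T'.1 x = {y | r (x 0) (y 0)} := by
    ext y
    simp [fiber, T', const_fin_one_eq, hx]
  have hT : d 1 T ≤ 1 := by
    obtain ⟨P₀, P₁, -, hP₁, hdT⟩ := hd.exists_fiberDimSet_dim_eq_max T
    have hP₁_empty : P₁.1 = ∅ := by
      rw [hP₁, eq_empty_iff_forall_notMem]
      rintro x ⟨hf, hdim⟩
      have hfiber : d 0 ⟨_, hf⟩ = d 0 ⟨_, hsegment (x 0)⟩ :=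
        congrArg _ (Subtype.ext (hT_fiber x))
      exact absurd (hdim ▸ hfiber ▸ hsegment_dim (x 0)) (by decide)
    rw [hdT, h1.1 P₁ hP₁_empty, WithBot.bot_add, max_eq_left bot_le]
    exact h1.dim_le_one (h2 0) P₀
  have hT' : d 1 T' = d 1 T := h3 1 (Equiv.swap 0 1) T T' (by ext v; simp [T, T'])
  obtain ⟨P₀, P₁, hP₀, hP₁, hdT'⟩ := hd.exists_fiberDimSet_dim_eq_max T'
  have hP₁_dim : d 0 P₁ ≤ 0 :=
    WithBot.le_zero_of_add_one_le_one ((le_max_right _ _).trans (hdT' ▸ hT' ▸ hT))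
  obtain ⟨x₀, hx₀X, hx₀⟩ : ∃ x₀ ∈ X.1, x₀ ∈ P₀.1 := by
    by_contra! h
    have hXP₁ : X.1 ⊆ P₁.1 := by
      intro x hx
      have hf := definable_fiber_s11 T'.2 x
      have hne : (fiber T'.1 x).Nonempty :=
        ⟨x, by rw [hT'_fiber x hx]; exact (hr_total _ _).elim id id⟩
      rcases h1.dim_eq_zero_or_eq_one (h2 0) (X := ⟨_, hf⟩) hne with h' | h'
      · exact absurd (hP₀ ▸ ⟨hf, h'⟩) (h x hx)
      · exact hP₁ ▸ ⟨hf, h'⟩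
    exact absurd (hX ▸ ((h2 0).dim_mono hXP₁).trans hP₁_dim) (by decide)
  rw [hP₀] at hx₀
  obtain ⟨hf, hdim⟩ := hx₀
  have hcover : X.1 ⊆ (X.1 ∩ {y | r (y 0) (x₀ 0)}) ∪ fiber T'.1 x₀ := fun y hy => by
    rw [hT'_fiber x₀ hx₀X]
    exact (hr_total (y 0) (x₀ 0)).imp (⟨hy, ·⟩) id
  have hle :=
    (h2 0).dim_le_max_of_subset_union (A := ⟨_, hsegment (x₀ 0)⟩) (B := ⟨_, hf⟩) hcover
  rw [hX, hdim] at hle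
  exact absurd (hle.trans (max_le (hsegment_dim _) le_rfl)) (by decide)

section LinearOrder

variable [LinearOrder M]

lemma LtDefinable.definable_le (hlt : LtDefinable L M) :
    (univ : Set M).Definable L {v : Fin 2 → M | v 0 ≤ v 1} := by
  have h := (hlt.preimage_comp (![1, 0] : Fin 2 → Fin 2)).compl
  simp only [compl_ofPred, preimage_ofPred_eq, not_lt] at h
  exact h

lemma LtDefinable.definable_ge (hlt : LtDefinable L M) :
    (univ : Set M).Definable L {v : Fin 2 → M | v 1 ≤ v 0} := by
  have h := hlt.compl
  simp only [compl_ofPred, not_lt] at h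
  exact h

lemma IsDimFun.exists_bounded_subset_dim_eq_one (hd : IsDimFun d) (hlt : LtDefinable L M)
    {X : DefSet L M 1} (hX : d 0 X = 1) :
    ∃ Y : DefSet L M 1,
      Y.1 ⊆ X.1 ∧ BddAbove (asSet1 Y.1) ∧ BddBelow (asSet1 Y.1) ∧ d 0 Y = 1 := by
  obtain ⟨x, -⟩ := hd.1.nonempty_of_dim_ne_bot (hX ▸ WithBot.one_ne_bot)
  let lower : DefSet L M 1 := ⟨X.1 ∩ {y | y 0 ≤ x 0},
    X.2.inter (definable_preimage_subst hlt.definable_le ![Sum.inl 0, Sum.inr (x 0)])⟩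
  let upper : DefSet L M 1 := ⟨X.1 ∩ {y | x 0 ≤ y 0},
    X.2.inter (definable_preimage_subst hlt.definable_le ![Sum.inr (x 0), Sum.inl 0])⟩
  have hcover : X.1 ⊆ lower.1 ∪ upper.1 := fun y hy =>
    (le_total (y 0) (x 0)).imp (⟨hy, ·⟩) (⟨hy, ·⟩)
  obtain ⟨Y, a, b, hYX, hYI, hdY⟩ : ∃ (Y : DefSet L M 1) (a b : M),
      Y.1 ⊆ X.1 ∧ (∀ y ∈ Y.1, y 0 ∈ Icc a b) ∧ d 0 Y = 1 := by
    rcases le_max_iff.1 (hX ▸ (hd.2.1 0).dim_le_max_of_subset_union hcover) with hlower | hupper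
    · obtain ⟨b, ⟨Y, hY⟩, rfl, hdY⟩ := hd.exists_dim_initialSegment_eq_one
        (r := fun y z => z ≤ y) (fun y z => le_total z y) hlt.definable_ge
        (le_antisymm (hd.1.dim_le_one (hd.2.1 0) lower) hlower)
      exact ⟨⟨_, hY⟩, b, x 0, fun y hy => hy.1.1, fun y hy => ⟨hy.2, hy.1.2⟩, hdY⟩
    · obtain ⟨b, ⟨Y, hY⟩, rfl, hdY⟩ := hd.exists_dim_initialSegment_eq_one
        (r := (· ≤ ·)) le_total hlt.definable_le
        (le_antisymm (hd.1.dim_le_one (hd.2.1 0) upper) hupper)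
      exact ⟨⟨_, hY⟩, x 0, b, fun y hy => hy.1.1, fun y hy => ⟨hy.1.2, hy.2⟩, hdY⟩
  exact ⟨Y, hYX, ⟨b, fun y hy => (hYI _ hy).2⟩, ⟨a, fun y hy => (hYI _ hy).1⟩, hdY⟩

lemma IsDimFun.dim_eq_one_of_eq_on_bounded {d' : ∀ n : ℕ, DefSet L M (n + 1) → WithBot ℕ}
    (hd : IsDimFun d) (hd' : IsDimFun d') (hlt : LtDefinable L M)
    (hagree : ∀ Y : DefSet L M 1, BddAbove (asSet1 Y.1) → BddBelow (asSet1 Y.1) →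
      d 0 Y = d' 0 Y)
    {X : DefSet L M 1} (hX : d 0 X = 1) : d' 0 X = 1 := by
  obtain ⟨Y, hYX, hYa, hYb, hY⟩ := hd.exists_bounded_subset_dim_eq_one hlt hX
  refine le_antisymm (hd'.1.dim_le_one (hd'.2.1 0) X) ?_
  calc 1 = d' 0 Y := hY ▸ hagree Y hYa hYb
    _ ≤ d' 0 X := (hd'.2.1 0).dim_mono hYX

lemma IsDimFun.dim_eq_of_eq_on_bounded {d' : ∀ n : ℕ, DefSet L M (n + 1) → WithBot ℕ}
    (hd : IsDimFun d) (hd' : IsDimFun d') (hlt : LtDefinable L M)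
    (hagree : ∀ Y : DefSet L M 1, BddAbove (asSet1 Y.1) → BddBelow (asSet1 Y.1) →
      d 0 Y = d' 0 Y)
    (X : DefSet L M 1) : d 0 X = d' 0 X := by
  rcases eq_empty_or_nonempty X.1 with hX | hX
  · rw [hd.1.1 X hX, hd'.1.1 X hX]
  have hone : d 0 X = 1 ↔ d' 0 X = 1 :=
    ⟨hd.dim_eq_one_of_eq_on_bounded hd' hlt hagree,
      hd'.dim_eq_one_of_eq_on_bounded hd hlt fun Y hYa hYb => (hagree Y hYa hYb).symm⟩
  rcases hd.1.dim_eq_zero_or_eq_one (hd.2.1 0) hX with h | h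
  · rcases hd'.1.dim_eq_zero_or_eq_one (hd'.2.1 0) hX with h' | h'
    · rw [h, h']
    · exact absurd (h ▸ hone.2 h') zero_ne_one
  · rw [h, hone.1 h]

end LinearOrder

end DimensionFunction

/-- For an expansion `M` of a linear order, every dimension function is
completely determined by its restriction to the bounded definable subsets of `M`; moreover,
every dimension function takes the value `1` on some bounded definable subset of `M`. -/
theorem statement_11 (L : FirstOrder.Language.{v, w}) (M : Type u) [L.Structure M]
    [LinearOrder M] (hlt : LtDefinable L M) :
    (∀ d₁ ∈ DimFuns L M, ∀ d₂ ∈ DimFuns L M,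
      (∀ X : DefSet L M 1, BddAbove (asSet1 X.1) → BddBelow (asSet1 X.1) →
        d₁ 0 X = d₂ 0 X) →
      d₁ = d₂) ∧
    (∀ d ∈ DimFuns L M, ∃ X : DefSet L M 1,
      BddAbove (asSet1 X.1) ∧ BddBelow (asSet1 X.1) ∧ d 0 X = 1) := by
  refine ⟨fun d₁ hd₁ d₂ hd₂ hagree => ?_, fun d hd => ?_⟩
  · exact IsDimFun.eq_of_dim_eq hd₁ hd₂
      (funext (IsDimFun.dim_eq_of_eq_on_bounded hd₁ hd₂ hlt hagree))
  · obtain ⟨X, -, hX⟩ := IsDimFun.exists_bounded_subset_dim_eq_one hd hlt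
      (hd.1.2.2 ⟨univ, definable_univ⟩ rfl)
    exact ⟨X, hX⟩

end PaperDim
end
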